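/- Let s ∈ ℝ and let φ ∈ C_c^∞(ℝ) be supported in {ξ : 1/4 ≤ |ξ| ≤ 1}. For N > 0 define H_N(x) = ∫_ℝ e^{ixξ} φ(ξ) ⟨Nξ⟩^s dξ, where ⟨y⟩ = (1+y²)^{1/2}. Then there is a constant C > 0, depending only on s and φ, such that for all x ∈ ℝ and all N > 0, ⟨x⟩² |H_N(x)| ≤ C (1+N)^s. -/

import Mathlib

open MeasureTheory Complex Real FourierTransform
set_option maxHeartbeats 1000000

lemma aux_bound (f : ℝ → ℝ) (hf : Continuous f) (hc : HasCompactSupport f) :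
    ∃ A : ℝ, 0 ≤ A ∧ ∀ ξ, |f ξ| ≤ A := by
  obtain ⟨A, hA⟩ := hf.norm.bddAbove_range_of_hasCompactSupport hc.norm
  refine ⟨A, le_trans (abs_nonneg (f 0)) (hA ⟨0, rfl⟩), fun ξ => hA ⟨ξ, rfl⟩⟩

lemma aux_norm_fourier (f : ℝ → ℂ) (w : ℝ) (bnd : ℝ → ℝ) (hb : Integrable bnd)
    (h : ∀ v, ‖f v‖ ≤ bnd v) : ‖𝓕 f w‖ ≤ ∫ v, bnd v := by
  rw [Real.fourier_real_eq_integral_exp_smul]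
  refine norm_integral_le_of_norm_le hb (Filter.Eventually.of_forall fun v => ?_)
  rw [norm_smul]
  simp only [Complex.norm_exp_ofReal_mul_I, one_mul]
  exact h v

lemma aux_rpow (s N ξ : ℝ) (hN : 0 ≤ N) (hξ : 1/4 ≤ |ξ|) (hξ1 : |ξ| ≤ 1) :
    (1 + (N*ξ)^2) ^ (s/2) ≤ 32 ^ (|s|/2) * (1+N) ^ s := by
  have hxsq : (1/16 : ℝ) ≤ ξ^2 := by
    have := pow_le_pow_left₀ (by norm_num : (0:ℝ) ≤ 1/4) hξ 2
    rw [_root_.sq_abs] at this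
    norm_num at this ⊢
    linarith
  have hxsq1 : ξ^2 ≤ 1 := by
    have := pow_le_pow_left₀ (abs_nonneg ξ) hξ1 2
    rw [_root_.sq_abs] at this
    simpa using this
  have hp : (0:ℝ) < 1 + (N*ξ)^2 := by positivity
  have h1 : 1 + (N*ξ)^2 ≤ (1+N)^2 := by nlinarith [sq_nonneg N, sq_nonneg (N*ξ)]
  have h2 : (1+N)^2 ≤ 32 * (1 + (N*ξ)^2) := by nlinarith [sq_nonneg N, sq_nonneg (N-1)]
  have hsq : ((1+N)^2 : ℝ) ^ (s/2) = (1+N) ^ s := by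
    rw [← Real.rpow_natCast (1+N) 2, ← Real.rpow_mul (by positivity)]
    rw [show ((2:ℕ):ℝ) * (s/2) = s by push_cast; ring]
  rcases le_or_gt 0 s with hs | hs
  · have hb : (1 + (N*ξ)^2) ^ (s/2) ≤ ((1+N)^2 : ℝ) ^ (s/2) :=
      Real.rpow_le_rpow hp.le h1 (by positivity)
    have hK : (1:ℝ) ≤ 32 ^ (|s|/2) := Real.one_le_rpow (by norm_num) (by positivity)
    calc (1 + (N*ξ)^2) ^ (s/2) ≤ (1+N) ^ s := by rw [← hsq]; exact hb
      _ ≤ 32 ^ (|s|/2) * (1+N) ^ s := by nlinarith [Real.rpow_nonneg (by positivity : (0:ℝ) ≤ 1+N) s]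
  · have hq : (0:ℝ) < (1+N)^2 / 32 := by positivity
    have hle : (1+N)^2 / 32 ≤ 1 + (N*ξ)^2 := by linarith
    have hb : (1 + (N*ξ)^2) ^ (s/2) ≤ ((1+N)^2/32 : ℝ) ^ (s/2) :=
      Real.rpow_le_rpow_of_nonpos hq hle (by linarith)
    have habs : |s| = -s := abs_of_neg hs
    have heq : ((1+N)^2/32 : ℝ) ^ (s/2) = 32 ^ (|s|/2) * (1+N) ^ s := by
      rw [Real.div_rpow (by positivity) (by norm_num), hsq, habs]
      rw [div_eq_mul_inv, ← Real.rpow_neg (by norm_num : (0:ℝ) ≤ 32)]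
      ring_nf
    rw [heq] at hb; exact hb

lemma aux_shift1 (p t a b : ℝ) (hp : 0 < p) (hab : |a| ≤ b * p) :
    |a * p ^ (t-1)| ≤ b * p ^ t := by
  have h : p ^ (t-1) * p = p ^ t := by
    rw [← Real.rpow_add_one hp.ne' (t-1)]; ring_nf
  have hr : (0:ℝ) ≤ p ^ (t-1) := Real.rpow_nonneg hp.le _
  calc |a * p ^ (t-1)| = |a| * p ^ (t-1) := by rw [abs_mul, _root_.abs_of_nonneg hr]
    _ ≤ (b * p) * p ^ (t-1) := by exact mul_le_mul_of_nonneg_right hab hr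
    _ = b * (p ^ (t-1) * p) := by ring
    _ = b * p ^ t := by rw [h]

lemma aux_shift2 (p t a b : ℝ) (hp : 0 < p) (hab : |a| ≤ b * p^2) :
    |a * p ^ (t-2)| ≤ b * p ^ t := by
  have h : p ^ (t-2) * p^2 = p ^ t := by
    rw [← Real.rpow_natCast p 2, ← Real.rpow_add hp]; norm_num
  have hr : (0:ℝ) ≤ p ^ (t-2) := Real.rpow_nonneg hp.le _
  calc |a * p ^ (t-2)| = |a| * p ^ (t-2) := by rw [abs_mul, _root_.abs_of_nonneg hr]
    _ ≤ (b * p^2) * p ^ (t-2) := by exact mul_le_mul_of_nonneg_right hab hr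
    _ = b * (p ^ (t-2) * p^2) := by ring
    _ = b * p ^ t := by rw [h]

lemma aux_hd (N t ξ : ℝ) :
    HasDerivAt (fun y => (1 + (N*y)^2) ^ t) (2*N^2*ξ * t * (1 + (N*ξ)^2) ^ (t-1)) ξ := by
  have h0 : HasDerivAt (fun y : ℝ => N*y) N ξ := by
    simpa using (hasDerivAt_id ξ).const_mul N
  have h2 := (h0.pow 2).const_add 1
  have h3 := h2.rpow_const (p := t) (Or.inl (by positivity : (0:ℝ) < 1 + (N*ξ)^2).ne')
  convert h3 using 1
  · funext y; simp only [Pi.pow_apply]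
  · norm_num only [Pi.pow_apply]; ring

lemma aux_hd1 (s N ξ : ℝ) :
    HasDerivAt (fun y => 2*N^2*y * (s/2) * (1 + (N*y)^2) ^ (s/2-1))
      (2*N^2*(s/2) * (1+(N*ξ)^2)^(s/2-1)
        + 2*N^2*ξ*(s/2) * (2*N^2*ξ*(s/2-1)*(1+(N*ξ)^2)^(s/2-2))) ξ := by
  have ha : HasDerivAt (fun y : ℝ => 2*N^2*y * (s/2)) (2*N^2*(s/2)) ξ := by
    simpa using (((hasDerivAt_id ξ).const_mul (2*N^2)).mul_const (s/2))
  have hb := aux_hd N (s/2-1) ξ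
  have h := ha.mul hb
  have he : s/2-1-1 = s/2-2 := by ring
  rw [he] at h
  exact h

lemma aux_ptbound (s N ξ : ℝ) (hN : 0 < N) (h1 : 1/4 ≤ |ξ|) (h2 : |ξ| ≤ 1) :
    |(1 + (N*ξ)^2)^(s/2)| ≤ 32^(|s|/2) * (1+N)^s ∧
    |2*N^2*ξ*(s/2)*(1+(N*ξ)^2)^(s/2-1)| ≤ (4*|s|) * (32^(|s|/2) * (1+N)^s) ∧
    |2*N^2*(s/2) * (1+(N*ξ)^2)^(s/2-1)
        + 2*N^2*ξ*(s/2) * (2*N^2*ξ*(s/2-1)*(1+(N*ξ)^2)^(s/2-2))|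
      ≤ (16*|s| + 16*|s| * |s-2|) * (32^(|s|/2) * (1+N)^s) := by
  have hp : (0:ℝ) < 1 + (N*ξ)^2 := by positivity
  have hr := aux_rpow s N ξ hN.le h1 h2
  have hxsq : (1/16 : ℝ) ≤ ξ^2 := by
    have := pow_le_pow_left₀ (by norm_num : (0:ℝ) ≤ 1/4) h1 2
    rw [_root_.sq_abs] at this
    norm_num at this ⊢
    linarith
  have hNξ : N^2*|ξ| ≤ 4*(1 + (N*ξ)^2) := by
    have h := mul_le_mul_of_nonneg_left h1 (mul_nonneg (sq_nonneg N) (abs_nonneg ξ))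
    nlinarith [mul_pow N ξ 2, _root_.sq_abs ξ, abs_nonneg ξ, sq_nonneg N]
  have hN2 : N^2 ≤ 16*(1 + (N*ξ)^2) := by
    nlinarith [mul_pow N ξ 2, sq_nonneg N]
  have hN4 : N^4*ξ^2 ≤ 16*(1 + (N*ξ)^2)^2 := by
    nlinarith [mul_pow N ξ 2, sq_nonneg N, sq_nonneg ξ, sq_nonneg (N^2*ξ^2), sq_nonneg (N*ξ)]
  have hKpos : (0:ℝ) ≤ 32^(|s|/2) * (1+N)^s := by positivity
  refine ⟨?_, ?_, ?_⟩
  · rw [_root_.abs_of_nonneg (Real.rpow_nonneg hp.le _)]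
    exact hr
  · have e1 : |2*N^2*ξ*(s/2)| = N^2 * |ξ| * |s| := by
      rw [abs_mul, abs_mul, abs_mul, _root_.abs_of_nonneg (by norm_num : (0:ℝ) ≤ 2),
        _root_.abs_of_nonneg (sq_nonneg N), abs_div, _root_.abs_two]
      ring
    have ha : |2*N^2*ξ*(s/2)| ≤ (4*|s|) * (1 + (N*ξ)^2) := by
      rw [e1]
      nlinarith [mul_le_mul_of_nonneg_right hNξ (abs_nonneg s)]
    have := aux_shift1 (1 + (N*ξ)^2) (s/2) (2*N^2*ξ*(s/2)) (4*|s|) hp ha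
    calc |2*N^2*ξ*(s/2)*(1+(N*ξ)^2)^(s/2-1)| ≤ (4*|s|) * (1 + (N*ξ)^2)^(s/2) := this
      _ ≤ (4*|s|) * (32^(|s|/2) * (1+N)^s) :=
          mul_le_mul_of_nonneg_left hr (by positivity)
  · have ha1 : |2*N^2*(s/2)| ≤ (16*|s|) * (1 + (N*ξ)^2) := by
      rw [abs_mul, abs_mul, _root_.abs_of_nonneg (by norm_num : (0:ℝ) ≤ 2),
        _root_.abs_of_nonneg (sq_nonneg N), abs_div, _root_.abs_two]
      nlinarith [mul_le_mul_of_nonneg_right hN2 (abs_nonneg s)]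
    have t1 := aux_shift1 (1 + (N*ξ)^2) (s/2) (2*N^2*(s/2)) (16*|s|) hp ha1
    have e2 : 2*N^2*ξ*(s/2) * (2*N^2*ξ*(s/2-1)*(1+(N*ξ)^2)^(s/2-2))
        = (2*N^2*ξ*(s/2) * (2*N^2*ξ*(s/2-1))) * (1+(N*ξ)^2)^(s/2-2) := by ring
    have ha2 : |2*N^2*ξ*(s/2) * (2*N^2*ξ*(s/2-1))| ≤ (16*|s| * |s-2|) * (1 + (N*ξ)^2)^2 := by
      have e3 : |2*N^2*ξ*(s/2) * (2*N^2*ξ*(s/2-1))| = (N^2*|ξ| * |s|) * (N^2*|ξ| * |s-2|) := by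
        rw [abs_mul]
        congr 1
        · rw [abs_mul, abs_mul, abs_mul, _root_.abs_of_nonneg (by norm_num : (0:ℝ) ≤ 2),
            _root_.abs_of_nonneg (sq_nonneg N), abs_div, _root_.abs_two]
          ring
        · rw [show (s/2-1) = (s-2)/2 by ring, abs_mul, abs_mul, abs_mul,
            _root_.abs_of_nonneg (by norm_num : (0:ℝ) ≤ 2),
            _root_.abs_of_nonneg (sq_nonneg N), abs_div, _root_.abs_two]
          ring
      rw [e3]
      have h4 := mul_le_mul_of_nonneg_right hN4
        (mul_nonneg (abs_nonneg s) (abs_nonneg (s-2)))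
      calc N^2 * |ξ| * |s| * (N^2 * |ξ| * |s-2|) = N^4 * ξ^2 * (|s| * |s-2|) := by
            rw [← _root_.sq_abs ξ]; ring
        _ ≤ 16 * (1+(N*ξ)^2)^2 * (|s| * |s-2|) := h4
        _ = (16*|s| * |s-2|) * (1+(N*ξ)^2)^2 := by ring
    have t2' := aux_shift2 (1 + (N*ξ)^2) (s/2) (2*N^2*ξ*(s/2) * (2*N^2*ξ*(s/2-1)))
      (16*|s| * |s-2|) hp ha2
    rw [← e2] at t2'
    calc |2*N^2*(s/2) * (1+(N*ξ)^2)^(s/2-1)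
          + 2*N^2*ξ*(s/2) * (2*N^2*ξ*(s/2-1)*(1+(N*ξ)^2)^(s/2-2))|
        ≤ |2*N^2*(s/2) * (1+(N*ξ)^2)^(s/2-1)|
          + |2*N^2*ξ*(s/2) * (2*N^2*ξ*(s/2-1)*(1+(N*ξ)^2)^(s/2-2))| := abs_add_le _ _
      _ ≤ (16*|s|) * (1 + (N*ξ)^2)^(s/2) + (16*|s| * |s-2|) * (1 + (N*ξ)^2)^(s/2) := by
          exact add_le_add t1 t2'
      _ = (16*|s| + 16*|s| * |s-2|) * (1 + (N*ξ)^2)^(s/2) := by ring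
      _ ≤ (16*|s| + 16*|s| * |s-2|) * (32^(|s|/2) * (1+N)^s) :=
          mul_le_mul_of_nonneg_left hr (by positivity)

/-- Weighted pointwise bound for the kernel of the multiplier `⟨D⟩^s P_N`. -/
theorem stmt5 (s : ℝ) (φ : ℝ → ℝ) (hφ : ContDiff ℝ (⊤ : ℕ∞) φ) (hφc : HasCompactSupport φ)
    (hsupp : Function.support φ ⊆ {ξ : ℝ | 1/4 ≤ |ξ| ∧ |ξ| ≤ 1})
    (H : ℝ → ℝ → ℂ)
    (hH : ∀ N x, H N x =
      ∫ ξ : ℝ, Complex.exp (Complex.I * x * ξ) *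
        ((φ ξ * (1 + (N * ξ) ^ 2) ^ (s / 2) : ℝ) : ℂ)) :
    ∃ C > (0:ℝ), ∀ N x : ℝ, 0 < N →
      (1 + x ^ 2) * ‖H N x‖ ≤ C * (1 + N) ^ s := by
  classical
  set D : ℝ → ℝ := deriv φ with hD
  set D2 : ℝ → ℝ := deriv D with hD2def
  have hφ' : ContDiff ℝ (⊤:ℕ∞) φ := hφ.of_le (by simp)
  have hφ1 : ContDiff ℝ (⊤:ℕ∞) D := (contDiff_infty_iff_deriv.mp hφ').2
  have hφ2 : ContDiff ℝ (⊤:ℕ∞) D2 := (contDiff_infty_iff_deriv.mp hφ1).2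
  have hφd : ∀ ξ, HasDerivAt φ (D ξ) ξ :=
    fun ξ => (hφ.differentiable (by simp) ξ).hasDerivAt
  have hDd : ∀ ξ, HasDerivAt D (D2 ξ) ξ :=
    fun ξ => (hφ1.differentiable (by simp) ξ).hasDerivAt
  -- support facts
  set S : Set ℝ := {ξ : ℝ | 1/4 ≤ |ξ| ∧ |ξ| ≤ 1} with hS
  have hSclosed : IsClosed S := by
    have : S = (fun ξ : ℝ => |ξ|) ⁻¹' (Set.Icc (1/4) 1) := by
      ext ξ; simp [hS, Set.mem_Icc]
    rw [this]
    exact isClosed_Icc.preimage _root_.continuous_abs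
  have htsupp : tsupport φ ⊆ S := closure_minimal hsupp hSclosed
  have hφ0 : ∀ ξ ∉ S, φ ξ = 0 := by
    intro ξ hξ
    by_contra h
    exact hξ (htsupp (subset_closure (Function.mem_support.mpr h)))
  have hD0 : ∀ ξ ∉ S, D ξ = 0 := by
    intro ξ hξ
    by_contra h
    exact hξ (htsupp (support_deriv_subset (Function.mem_support.mpr h)))
  have htsuppD : tsupport D ⊆ S :=
    closure_minimal (support_deriv_subset.trans htsupp) hSclosed
  have hD20 : ∀ ξ ∉ S, D2 ξ = 0 := by
    intro ξ hξ
    by_contra h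
    exact hξ (htsuppD (support_deriv_subset (Function.mem_support.mpr h)))
  -- bounds on φ and its derivatives
  obtain ⟨A0, hA0n, hA0⟩ := aux_bound φ hφ.continuous hφc
  obtain ⟨A1, hA1n, hA1⟩ := aux_bound D hφ1.continuous hφc.deriv
  obtain ⟨A2, hA2n, hA2⟩ := aux_bound D2 hφ2.continuous hφc.deriv.deriv
  set K : ℝ := 32 ^ (|s|/2) with hK
  have hKpos : 0 < K := Real.rpow_pos_of_pos (by norm_num) _
  set M0 : ℝ := A0 * K with hM0
  set M2 : ℝ := (A2 + 2*A1*(4*|s|) + A0*(16*|s| + 16*|s| * |s-2|)) * K with hM2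
  have hM0n : 0 ≤ M0 := by positivity
  have hM2n : 0 ≤ M2 := by positivity
  refine ⟨2*M0 + 2*M2 + 1, by positivity, ?_⟩
  intro N x hN
  have hNs : (0:ℝ) ≤ (1+N) ^ s := Real.rpow_nonneg (by linarith) s
  -- the functions
  set g0 : ℝ → ℂ := fun ξ => ((φ ξ * (1 + (N * ξ) ^ 2) ^ (s / 2) : ℝ) : ℂ) with hg0
  set g1 : ℝ → ℂ := fun ξ => ((D ξ * (1 + (N*ξ)^2)^(s/2)
      + φ ξ * (2*N^2*ξ*(s/2)*(1 + (N*ξ)^2)^(s/2-1)) : ℝ) : ℂ) with hg1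
  set g2 : ℝ → ℂ := fun ξ => ((D2 ξ * (1 + (N*ξ)^2)^(s/2)
      + D ξ * (2*N^2*ξ*(s/2)*(1 + (N*ξ)^2)^(s/2-1))
      + (D ξ * (2*N^2*ξ*(s/2)*(1 + (N*ξ)^2)^(s/2-1))
        + φ ξ * (2*N^2*(s/2) * (1+(N*ξ)^2)^(s/2-1)
          + 2*N^2*ξ*(s/2) * (2*N^2*ξ*(s/2-1)*(1+(N*ξ)^2)^(s/2-2)))) : ℝ) : ℂ) with hg2
  have hd0 : ∀ ξ, HasDerivAt g0 (g1 ξ) ξ := by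
    intro ξ
    exact ((hφd ξ).mul (aux_hd N (s/2) ξ)).ofReal_comp
  have hd1 : ∀ ξ, HasDerivAt g1 (g2 ξ) ξ := by
    intro ξ
    exact (((hDd ξ).mul (aux_hd N (s/2) ξ)).add ((hφd ξ).mul (aux_hd1 s N ξ))).ofReal_comp
  -- continuity
  have hrc : ∀ t : ℝ, Continuous fun ξ : ℝ => (1 + (N*ξ)^2) ^ t := by
    intro t
    apply Continuous.rpow_const
      (continuous_const.add ((continuous_const.mul continuous_id).pow 2))
    intro ξ
    exact Or.inl (by positivity : (0:ℝ) < 1 + (N*ξ)^2).ne'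
  have hlin : Continuous fun ξ : ℝ => 2*N^2*ξ := continuous_const.mul continuous_id
  have hu1c : Continuous fun ξ : ℝ => 2*N^2*ξ*(s/2)*(1 + (N*ξ)^2)^(s/2-1) :=
    (hlin.mul continuous_const).mul (hrc (s/2-1))
  have hu2c : Continuous fun ξ : ℝ => 2*N^2*(s/2) * (1+(N*ξ)^2)^(s/2-1)
      + 2*N^2*ξ*(s/2) * (2*N^2*ξ*(s/2-1)*(1+(N*ξ)^2)^(s/2-2)) :=
    (continuous_const.mul (hrc (s/2-1))).add
      ((hlin.mul continuous_const).mul ((hlin.mul continuous_const).mul (hrc (s/2-2))))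
  have hg0c : Continuous g0 :=
    Complex.continuous_ofReal.comp (hφ.continuous.mul (hrc (s/2)))
  have hg1c : Continuous g1 :=
    Complex.continuous_ofReal.comp
      ((hφ1.continuous.mul (hrc (s/2))).add (hφ.continuous.mul hu1c))
  have hg2c : Continuous g2 :=
    Complex.continuous_ofReal.comp
      (((hφ2.continuous.mul (hrc (s/2))).add (hφ1.continuous.mul hu1c)).add
        ((hφ1.continuous.mul hu1c).add (hφ.continuous.mul hu2c)))
  -- compact support and integrability
  have hg0s : HasCompactSupport g0 := by
    apply HasCompactSupport.intro hφc
    intro ξ hξ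
    simp [hg0, image_eq_zero_of_notMem_tsupport hξ]
  have hg1s : HasCompactSupport g1 := by
    apply HasCompactSupport.intro hφc
    intro ξ hξ
    have h1 : φ ξ = 0 := image_eq_zero_of_notMem_tsupport hξ
    have h2 : D ξ = 0 := by
      by_contra h
      exact hξ (support_deriv_subset (Function.mem_support.mpr h))
    simp [hg1, h1, h2]
  have htsD : tsupport D ⊆ tsupport φ :=
    closure_minimal support_deriv_subset isClosed_closure
  have hg2s : HasCompactSupport g2 := by
    apply HasCompactSupport.intro hφc
    intro ξ hξ
    have h1 : φ ξ = 0 := image_eq_zero_of_notMem_tsupport hξ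
    have h2 : D ξ = 0 := by
      by_contra h
      exact hξ (support_deriv_subset (Function.mem_support.mpr h))
    have h3 : D2 ξ = 0 := by
      by_contra h
      exact hξ (htsD (support_deriv_subset (Function.mem_support.mpr h)))
    simp [hg2, h1, h2, h3]
  have hg0i : Integrable g0 := hg0c.integrable_of_hasCompactSupport hg0s
  have hg1i : Integrable g1 := hg1c.integrable_of_hasCompactSupport hg1s
  have hg2i : Integrable g2 := hg2c.integrable_of_hasCompactSupport hg2s
  -- pointwise bounds via indicator
  set bnd0 : ℝ → ℝ := Set.indicator (Set.Icc (-1:ℝ) 1) (fun _ => M0 * (1+N)^s) with hbnd0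
  set bnd2 : ℝ → ℝ := Set.indicator (Set.Icc (-1:ℝ) 1) (fun _ => M2 * (1+N)^s) with hbnd2
  have hbnd0i : Integrable bnd0 :=
    (integrable_indicator_iff measurableSet_Icc).2 (integrableOn_const (by
      rw [Real.volume_Icc]; norm_num))
  have hbnd2i : Integrable bnd2 :=
    (integrable_indicator_iff measurableSet_Icc).2 (integrableOn_const (by
      rw [Real.volume_Icc]; norm_num))
  have hbnd0int : ∫ v, bnd0 v = 2 * (M0 * (1+N)^s) := by
    rw [hbnd0, integral_indicator_const _ measurableSet_Icc, measureReal_def, Real.volume_Icc, smul_eq_mul]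
    norm_num
  have hbnd2int : ∫ v, bnd2 v = 2 * (M2 * (1+N)^s) := by
    rw [hbnd2, integral_indicator_const _ measurableSet_Icc, measureReal_def, Real.volume_Icc, smul_eq_mul]
    norm_num
  have hb0 : ∀ ξ, ‖g0 ξ‖ ≤ bnd0 ξ := by
    intro ξ
    by_cases hξS : ξ ∈ S
    · have hmem : ξ ∈ Set.Icc (-1:ℝ) 1 := by
        rcases abs_le.mp hξS.2 with ⟨hl, hr⟩
        exact ⟨hl, hr⟩
      rw [hbnd0, Set.indicator_of_mem hmem]
      have := (aux_ptbound s N ξ hN hξS.1 hξS.2).1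
      rw [hg0]
      simp only [Complex.norm_real, Real.norm_eq_abs, abs_mul]
      calc |φ ξ| * |(1 + (N*ξ)^2)^(s/2)| ≤ A0 * (K * (1+N)^s) := by
            apply mul_le_mul (hA0 ξ) this (abs_nonneg _) hA0n
        _ = M0 * (1+N)^s := by rw [hM0]; ring
    · have h1 : φ ξ = 0 := hφ0 ξ hξS
      have : g0 ξ = 0 := by simp [hg0, h1]
      rw [this, norm_zero]
      exact Set.indicator_nonneg (fun _ _ => by positivity) ξ
  have hb2 : ∀ ξ, ‖g2 ξ‖ ≤ bnd2 ξ := by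
    intro ξ
    by_cases hξS : ξ ∈ S
    · have hmem : ξ ∈ Set.Icc (-1:ℝ) 1 := by
        rcases abs_le.mp hξS.2 with ⟨hl, hr⟩
        exact ⟨hl, hr⟩
      rw [hbnd2, Set.indicator_of_mem hmem]
      obtain ⟨p0, p1, p2⟩ := aux_ptbound s N ξ hN hξS.1 hξS.2
      rw [hg2]
      simp only [Complex.norm_real, Real.norm_eq_abs]
      have hT : |D2 ξ * (1 + (N*ξ)^2)^(s/2)
          + D ξ * (2*N^2*ξ*(s/2)*(1 + (N*ξ)^2)^(s/2-1))
          + (D ξ * (2*N^2*ξ*(s/2)*(1 + (N*ξ)^2)^(s/2-1))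
            + φ ξ * (2*N^2*(s/2) * (1+(N*ξ)^2)^(s/2-1)
              + 2*N^2*ξ*(s/2) * (2*N^2*ξ*(s/2-1)*(1+(N*ξ)^2)^(s/2-2))))|
          ≤ A2 * (K * (1+N)^s) + A1 * ((4*|s|) * (K * (1+N)^s))
            + (A1 * ((4*|s|) * (K * (1+N)^s))
              + A0 * ((16*|s| + 16*|s| * |s-2|) * (K * (1+N)^s))) := by
        have habs4 := abs_add_le (D2 ξ * (1 + (N*ξ)^2)^(s/2)
            + D ξ * (2*N^2*ξ*(s/2)*(1 + (N*ξ)^2)^(s/2-1)))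
          (D ξ * (2*N^2*ξ*(s/2)*(1 + (N*ξ)^2)^(s/2-1))
            + φ ξ * (2*N^2*(s/2) * (1+(N*ξ)^2)^(s/2-1)
              + 2*N^2*ξ*(s/2) * (2*N^2*ξ*(s/2-1)*(1+(N*ξ)^2)^(s/2-2))))
        have h11 : |D2 ξ * (1 + (N*ξ)^2)^(s/2)| ≤ A2 * (K * (1+N)^s) := by
          rw [abs_mul]
          exact mul_le_mul (hA2 ξ) p0 (abs_nonneg _) hA2n
        have h12 : |D ξ * (2*N^2*ξ*(s/2)*(1 + (N*ξ)^2)^(s/2-1))|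
            ≤ A1 * ((4*|s|) * (K * (1+N)^s)) := by
          rw [abs_mul]
          exact mul_le_mul (hA1 ξ) p1 (abs_nonneg _) hA1n
        have h13 : |φ ξ * (2*N^2*(s/2) * (1+(N*ξ)^2)^(s/2-1)
              + 2*N^2*ξ*(s/2) * (2*N^2*ξ*(s/2-1)*(1+(N*ξ)^2)^(s/2-2)))|
            ≤ A0 * ((16*|s| + 16*|s| * |s-2|) * (K * (1+N)^s)) := by
          rw [abs_mul]
          exact mul_le_mul (hA0 ξ) p2 (abs_nonneg _) hA0n
        have habs1 := abs_add_le (D2 ξ * (1 + (N*ξ)^2)^(s/2))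
          (D ξ * (2*N^2*ξ*(s/2)*(1 + (N*ξ)^2)^(s/2-1)))
        have habs2 := abs_add_le (D ξ * (2*N^2*ξ*(s/2)*(1 + (N*ξ)^2)^(s/2-1)))
          (φ ξ * (2*N^2*(s/2) * (1+(N*ξ)^2)^(s/2-1)
              + 2*N^2*ξ*(s/2) * (2*N^2*ξ*(s/2-1)*(1+(N*ξ)^2)^(s/2-2))))
        linarith
      calc _ ≤ _ := hT
        _ = M2 * (1+N)^s := by rw [hM2]; ring
    · have h1 : φ ξ = 0 := hφ0 ξ hξS
      have h2 : D ξ = 0 := hD0 ξ hξS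
      have h3 : D2 ξ = 0 := hD20 ξ hξS
      have : g2 ξ = 0 := by simp [hg2, h1, h2, h3]
      rw [this, norm_zero]
      exact Set.indicator_nonneg (fun _ _ => by positivity) ξ
  -- Fourier representation
  set w : ℝ := -x / (2 * π) with hw
  have hHF : H N x = 𝓕 g0 w := by
    rw [hH, Real.fourier_real_eq_integral_exp_smul]
    congr 1
    funext v
    rw [smul_eq_mul]
    congr 1
    have harg : -2 * π * v * w = x * v := by
      rw [hw]
      field_simp
    rw [harg]
    push_cast
    ring_nf
  have hderiv0 : deriv g0 = g1 := funext fun ξ => (hd0 ξ).deriv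
  have hderiv1 : deriv g1 = g2 := funext fun ξ => (hd1 ξ).deriv
  have hF1 : 𝓕 g1 = fun w : ℝ => (2 * π * Complex.I * w) • 𝓕 g0 w := by
    rw [← hderiv0]
    exact Real.fourier_deriv hg0i (fun ξ => (hd0 ξ).differentiableAt)
      (hderiv0 ▸ hg1i)
  have hF2 : 𝓕 g2 = fun w : ℝ => (2 * π * Complex.I * w) • 𝓕 g1 w := by
    rw [← hderiv1]
    exact Real.fourier_deriv hg1i (fun ξ => (hd1 ξ).differentiableAt)
      (hderiv1 ▸ hg2i)
  -- norms
  have hnorm0 : ‖𝓕 g0 w‖ ≤ 2 * (M0 * (1+N)^s) := by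
    rw [← hbnd0int]
    exact aux_norm_fourier g0 w bnd0 hbnd0i hb0
  have hnorm2 : ‖𝓕 g2 w‖ ≤ 2 * (M2 * (1+N)^s) := by
    rw [← hbnd2int]
    exact aux_norm_fourier g2 w bnd2 hbnd2i hb2
  have hcoef : ‖(2 * π * Complex.I * (w:ℂ))‖ = |x| := by
    have h1 : ‖(2 * π * Complex.I * (w:ℂ))‖ = 2 * π * |w| := by
      rw [norm_mul, norm_mul, norm_mul, Complex.norm_I, Complex.norm_real, Complex.norm_real,
        Complex.norm_ofNat, mul_one, Real.norm_eq_abs, Real.norm_eq_abs,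
        _root_.abs_of_nonneg Real.pi_pos.le]
    rw [h1, hw, abs_div, abs_neg, _root_.abs_of_nonneg (by positivity : (0:ℝ) ≤ 2*π)]
    field_simp
  have hx2 : x^2 * ‖𝓕 g0 w‖ = ‖𝓕 g2 w‖ := by
    rw [hF2, hF1]
    simp only [norm_smul, hcoef]
    rw [← mul_assoc, ← _root_.sq_abs x]
    ring
  rw [hHF]
  have hfinal : (1 + x^2) * ‖𝓕 g0 w‖ = ‖𝓕 g0 w‖ + x^2 * ‖𝓕 g0 w‖ := by ring
  rw [hfinal, hx2]
  calc ‖𝓕 g0 w‖ + ‖𝓕 g2 w‖ ≤ 2 * (M0 * (1+N)^s) + 2 * (M2 * (1+N)^s) :=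
        add_le_add hnorm0 hnorm2
    _ = (2*M0 + 2*M2) * (1+N)^s := by ring
    _ ≤ (2*M0 + 2*M2 + 1) * (1+N)^s := by nlinarith
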